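/- arXiv:1710.05331 — 7 statements merged into one kernel-verified Lean document; each statement's English description precedes it below -/
import Mathlib

section
/- Let q ≥ 2 be an integer and t > 0 a real number such that q(q−1)t is a positive integer. Then the n-th digit t^(n) of t in base q is constant for all n ≥ 2, and this constant value is nonzero. -/
/-!
Once `(q - 1) t q` is an integer, so is `(q - 1) t qⁿ` for every `n ≥ 1`; hence
`t qⁿ⁺¹ - t qⁿ = (q - 1) t qⁿ` is an integer and the gap `⌈t qⁿ⌉ - t qⁿ ∈ [0, 1)` does not depend
on `n ≥ 1`. Expanding the definition, the digit `t^(n+1)` equals `(q - 1) (1 - (⌈t qⁿ⌉ - t qⁿ))`,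
which is therefore the same positive number for all `n ≥ 1`.
-/

/-- The `n`-th digit of `t` in base `q`. -/
noncomputable def baseDigit (q : ℤ) (t : ℝ) (n : ℤ) : ℤ :=
  ⌈t * (q : ℝ) ^ n - 1⌉ - q * ⌈t * (q : ℝ) ^ (n - 1) - 1⌉

section

variable {q : ℤ} {t : ℝ}

lemma baseDigit_eq_ceil_sub_mul_ceil (q : ℤ) (t : ℝ) (n : ℤ) :
    baseDigit q t n = ⌈t * (q : ℝ) ^ n⌉ - q * ⌈t * (q : ℝ) ^ (n - 1)⌉ + (q - 1) := by
  simp only [baseDigit, Int.ceil_sub_one]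
  ring

lemma exists_sub_one_mul_mul_zpow_eq_intCast (hq : q ≠ 0) {N : ℤ}
    (hN : ((q : ℝ) - 1) * (t * q) = N) {n : ℤ} (hn : 1 ≤ n) :
    ∃ M : ℤ, ((q : ℝ) - 1) * (t * (q : ℝ) ^ n) = M := by
  induction n, hn using Int.leInduction with
  | base => exact ⟨N, by simpa using hN⟩
  | succ n _ ih =>
    obtain ⟨M, hM⟩ := ih
    refine ⟨M * q, ?_⟩
    rw [zpow_add_one₀ (by exact_mod_cast hq), Int.cast_mul, ← hM]
    ring

lemma mul_zpow_add_one_eq_add_intCast (hq : q ≠ 0) {n M : ℤ}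
    (hM : ((q : ℝ) - 1) * (t * (q : ℝ) ^ n) = M) :
    t * (q : ℝ) ^ (n + 1) = t * (q : ℝ) ^ n + M := by
  rw [← hM, zpow_add_one₀ (by exact_mod_cast hq)]
  ring

lemma ceil_mul_zpow_sub_eq_ceil_mul_sub (hq : q ≠ 0) {N : ℤ}
    (hN : ((q : ℝ) - 1) * (t * q) = N) {n : ℤ} (hn : 1 ≤ n) :
    ⌈t * (q : ℝ) ^ n⌉ - t * (q : ℝ) ^ n = ⌈t * q⌉ - t * q := by
  induction n, hn using Int.leInduction with
  | base => simp
  | succ n hn ih =>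
    obtain ⟨M, hM⟩ := exists_sub_one_mul_mul_zpow_eq_intCast hq hN hn
    rw [mul_zpow_add_one_eq_add_intCast hq hM, Int.ceil_add_intCast]
    push_cast
    linarith

lemma baseDigit_add_one_eq (hq : q ≠ 0) {n M : ℤ}
    (hM : ((q : ℝ) - 1) * (t * (q : ℝ) ^ n) = M) :
    (baseDigit q t (n + 1) : ℝ) = (q - 1) * (1 - (⌈t * (q : ℝ) ^ n⌉ - t * (q : ℝ) ^ n)) := by
  rw [baseDigit_eq_ceil_sub_mul_ceil, add_sub_cancel_right,
    mul_zpow_add_one_eq_add_intCast hq hM, Int.ceil_add_intCast]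
  push_cast
  linear_combination -hM

end

theorem digit_eventually_constant_general (q : ℤ) (hq : 2 ≤ q) (t : ℝ)
    (h : ∃ k : ℕ, 0 < k ∧ (q : ℝ) * ((q : ℝ) - 1) * t = (k : ℝ)) :
    ∃ l : ℤ, l ≠ 0 ∧ ∀ n : ℤ, 2 ≤ n → baseDigit q t n = l := by
  obtain ⟨k, -, hk⟩ := h
  have hq0 : q ≠ 0 := by omega
  have hN : ((q : ℝ) - 1) * (t * q) = ((k : ℤ) : ℝ) := by
    rw [Int.cast_natCast, ← hk]
    ring
  have hdigit : ∀ n ≥ 2, (baseDigit q t n : ℝ) = (q - 1) * (1 - (⌈t * q⌉ - t * q)) := by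
    intro n hn
    obtain ⟨M, hM⟩ := exists_sub_one_mul_mul_zpow_eq_intCast hq0 hN (n := n - 1) (by omega)
    rw [← sub_add_cancel n 1, baseDigit_add_one_eq hq0 hM,
      ceil_mul_zpow_sub_eq_ceil_mul_sub hq0 hN (by omega)]
  have hpos : (0 : ℝ) < baseDigit q t 2 := by
    have hgap := Int.ceil_lt_add_one (t * q)
    have hq1 : (1 : ℝ) < q := by exact_mod_cast hq
    rw [hdigit 2 le_rfl]
    apply mul_pos <;> linarith
  refine ⟨baseDigit q t 2, by exact_mod_cast hpos.ne', fun n hn => ?_⟩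
  exact_mod_cast (hdigit n hn).trans (hdigit 2 le_rfl).symm

/-- If `q(q−1)t` is a positive integer, then the digits `t^(n)` are constant for `n ≥ 2`,
with nonzero constant value. -/
theorem digit_eventually_constant (q : ℤ) (hq : 2 ≤ q) (t : ℝ) (ht : 0 < t)
    (h : ∃ k : ℕ, 0 < k ∧ (q : ℝ) * ((q : ℝ) - 1) * t = (k : ℝ)) :
    ∃ l : ℤ, l ≠ 0 ∧ ∀ n : ℤ, 2 ≤ n → baseDigit q t n = l :=
  digit_eventually_constant_general q hq t h
end

section
/- Let R be a commutative ring of prime characteristic p > 0, let 𝔞 ⊆ R be an ideal generated by at most μ elements, and let a ≥ 0, b, e ≥ 0 be integers with b > p^e(μ − 1). Then 𝔞^(a·p^e + b) = (𝔞^a)^[p^e] · 𝔞^b, where (𝔞^a)^[p^e] denotes the ideal generated by the p^e-th powers of elements of 𝔞^a. -/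
/-- The Frobenius power `I^[q]` of an ideal: the ideal generated by `q`-th powers
of elements of `I`. -/
def frobPow {R : Type*} [CommSemiring R] (I : Ideal R) (q : ℕ) : Ideal R :=
  Ideal.span ((fun f => f ^ q) '' (I : Set R))

section aux
variable {R : Type*} [CommRing R] (p : ℕ) (hp : p.Prime) [CharP R p]

lemma mem_frobPow {I : Ideal R} {q : ℕ} {f : R} (hf : f ∈ I) : f ^ q ∈ frobPow I q :=
  Ideal.subset_span ⟨f, hf, rfl⟩

lemma frobPow_le_pow (I : Ideal R) (q : ℕ) : frobPow I q ≤ I ^ q := by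
  rw [frobPow, Ideal.span_le]
  rintro _ ⟨f, hf, rfl⟩
  exact Ideal.pow_mem_pow hf q

lemma frobPow_top (q : ℕ) : frobPow (⊤ : Ideal R) q = ⊤ := by
  rw [Ideal.eq_top_iff_one]
  simpa using mem_frobPow (I := (⊤ : Ideal R)) (q := q) (f := 1) trivial

include hp in
lemma frobPow_mul (I J : Ideal R) (e : ℕ) :
    frobPow (I * J) (p ^ e) = frobPow I (p ^ e) * frobPow J (p ^ e) := by
  haveI : Fact p.Prime := ⟨hp⟩
  apply le_antisymm
  · rw [frobPow, Ideal.span_le]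
    rintro _ ⟨f, hf, rfl⟩
    refine Submodule.mul_induction_on hf ?_ ?_
    · intro x hx y hy
      show (x * y) ^ p ^ e ∈ _
      rw [mul_pow]
      exact Ideal.mul_mem_mul (mem_frobPow hx) (mem_frobPow hy)
    · intro x y hx hy
      show (x + y) ^ p ^ e ∈ _
      rw [add_pow_char_pow]
      exact add_mem hx hy
  · rw [frobPow, frobPow, Ideal.span_mul_span', Ideal.span_le]
    rintro _ ⟨_, ⟨x, hx, rfl⟩, _, ⟨y, hy, rfl⟩, rfl⟩
    show x ^ p ^ e * y ^ p ^ e ∈ _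
    rw [← mul_pow]
    exact mem_frobPow (Ideal.mul_mem_mul hx hy)

end aux

open Finset in
lemma base_step {R : Type*} [CommRing R] (𝔞 : Ideal R) (S : Finset R)
    (hS : Ideal.span (S : Set R) = 𝔞) (μ q b : ℕ) (hcard : S.card ≤ μ) (hq : 1 ≤ q)
    (hb : (q : ℤ) * ((μ : ℤ) - 1) < (b : ℤ)) :
    𝔞 ^ (q + b) = frobPow 𝔞 q * 𝔞 ^ b := by
  classical
  apply le_antisymm
  · rw [← hS]
    show Submodule.span R (S : Set R) ^ (q + b) ≤ _
    rw [Submodule.span_pow, Submodule.span_le]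
    intro x hx
    rw [Set.mem_pow] at hx
    obtain ⟨f, hf⟩ := hx
    rw [← hf, List.prod_ofFn]
    set g : Fin (q + b) → R := fun i => (f i : R) with hg
    have hgS : ∀ i, g i ∈ S := fun i => (f i).2
    have hg𝔞 : ∀ i, g i ∈ 𝔞 := fun i => hS ▸ Ideal.subset_span (hgS i)
    -- pigeonhole
    have hlt : S.card * (q - 1) < (Finset.univ : Finset (Fin (q + b))).card := by
      rw [Finset.card_univ, Fintype.card_fin]
      have : (S.card : ℤ) * ((q : ℤ) - 1) < (q : ℤ) + b := by
        have h1 : (S.card : ℤ) ≤ μ := by exact_mod_cast hcard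
        have h2 : (0 : ℤ) ≤ (q : ℤ) - 1 := by
          have : (1 : ℤ) ≤ q := by exact_mod_cast hq
          linarith
        nlinarith
      zify [hq]
      convert this using 2
    obtain ⟨y, hyS, hy⟩ :=
      Finset.exists_lt_card_fiber_of_mul_lt_card_of_maps_to (fun i _ => hgS i) hlt
    have hyq : q ≤ (Finset.univ.filter fun i => g i = y).card := by omega
    obtain ⟨T, hT_sub, hT_card⟩ := Finset.exists_subset_card_eq hyq
    have hsplit : (∏ i ∈ Finset.univ \ T, g i) * ∏ i ∈ T, g i = ∏ i, g i :=
      Finset.prod_sdiff (Finset.subset_univ T)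
    have hTy : ∏ i ∈ T, g i = y ^ q := by
      rw [Finset.prod_congr rfl (fun i hi => (Finset.mem_filter.mp (hT_sub hi)).2),
        Finset.prod_const, hT_card]
    have h1 : y ^ q ∈ frobPow 𝔞 q := mem_frobPow (hS ▸ Ideal.subset_span hyS)
    have h2 : (∏ i ∈ Finset.univ \ T, g i) ∈ 𝔞 ^ b := by
      have := Ideal.prod_mem_prod (s := Finset.univ \ T) (I := fun _ => 𝔞) (x := g)
        (fun i _ => hg𝔞 i)
      have hcard' : (Finset.univ \ T).card = b := by
        rw [Finset.card_sdiff_of_subset (Finset.subset_univ T), hT_card, Finset.card_univ,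
          Fintype.card_fin]
        omega
      rwa [Finset.prod_const, hcard'] at this
    rw [← hsplit, hTy, hS]
    exact Ideal.mul_mem_mul_rev h1 h2
  · rw [pow_add]
    exact Ideal.mul_mono (frobPow_le_pow 𝔞 q) le_rfl

/-- Skoda-type lemma: if `𝔞` has at most `μ` generators and `b > p^e(μ − 1)`, then
`𝔞^(a·p^e + b) = (𝔞^a)^[p^e] · 𝔞^b`. -/
theorem pow_eq_frobPow_mul {R : Type*} [CommRing R] (p : ℕ) (hp : p.Prime) [CharP R p]
    (𝔞 : Ideal R) (μ : ℕ) (hμ : ∃ S : Finset R, S.card ≤ μ ∧ Ideal.span (S : Set R) = 𝔞)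
    (a b e : ℕ) (hb : (p : ℤ) ^ e * ((μ : ℤ) - 1) < (b : ℤ)) :
    𝔞 ^ (a * p ^ e + b) = frobPow (𝔞 ^ a) (p ^ e) * 𝔞 ^ b := by
  obtain ⟨S, hcard, hspan⟩ := hμ
  have hq : 1 ≤ p ^ e := Nat.one_le_pow _ _ hp.pos
  induction a generalizing b with
  | zero => simp [pow_zero, Ideal.one_eq_top, frobPow_top]
  | succ a ih =>
    have hqb : ((p : ℤ) ^ e) * ((μ : ℤ) - 1) < ((p ^ e + b : ℕ) : ℤ) := by
      have : (0 : ℤ) ≤ (p : ℤ) ^ e := by positivity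
      push_cast
      linarith
    have hbase : ((p : ℤ) ^ e) * ((μ : ℤ) - 1) < (b : ℤ) := hb
    calc 𝔞 ^ ((a + 1) * p ^ e + b) = 𝔞 ^ (a * p ^ e + (p ^ e + b)) := by ring_nf
      _ = frobPow (𝔞 ^ a) (p ^ e) * 𝔞 ^ (p ^ e + b) := ih (p ^ e + b) hqb
      _ = frobPow (𝔞 ^ a) (p ^ e) * (frobPow 𝔞 (p ^ e) * 𝔞 ^ b) := by
          rw [base_step 𝔞 S hspan μ (p ^ e) b hcard (by exact_mod_cast hq) (by push_cast; exact hbase)]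
      _ = (frobPow (𝔞 ^ a) (p ^ e) * frobPow 𝔞 (p ^ e)) * 𝔞 ^ b := (mul_assoc _ _ _).symm
      _ = frobPow (𝔞 ^ (a + 1)) (p ^ e) * 𝔞 ^ b := by
          rw [← frobPow_mul p hp, ← pow_succ]
end

section
/- Let l, n > 0 and q ≥ 2 be integers. Then there exists a positive integer N (one may take N = q^n(q^{n!} − 1)) with the following property: if B ⊆ ℝ_{≥0} is a subset such that (1) for every b ∈ B with b > l one has b − 1 ∈ B, (2) for every b ∈ B one has q·b ∈ B, and (3) the set B ∩ [0, l] has at most n elements, then every element of B is of the form k/N for some integer k ≥ 0. -/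
/-!
Subtracting 1 while above `l` brings every element of `B` into the finite set `S = B ∩ [0, l]`.
Hence for `b ∈ B` each `q ^ i * b` is congruent modulo `ℤ` to an element of `S` (multiply the
previous representative by `q`, then reduce). Among `i = 0, …, n` two representatives coincide,
so `(q ^ j - q ^ i) * b ∈ ℕ` for some `i < j ≤ n`, and `q ^ j - q ^ i = q ^ i * (q ^ (j - i) - 1)`
divides `q ^ n * (q ^ n! - 1)` because `j - i ∣ n!`.
-/

namespace AccDenominator

theorem pow_sub_pow_dvd_pow_mul_pow_factorial_sub_one (q : ℕ) {i j n : ℕ} (hij : i < j)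
    (hjn : j ≤ n) : q ^ j - q ^ i ∣ q ^ n * (q ^ n.factorial - 1) := by
  have hfactor : q ^ j - q ^ i = q ^ i * (q ^ (j - i) - 1) := by
    rw [Nat.mul_sub, mul_one, ← pow_add, Nat.add_sub_cancel' hij.le]
  rw [hfactor]
  exact mul_dvd_mul (pow_dvd_pow q (hij.le.trans hjn))
    (Nat.pow_sub_one_dvd_pow_sub_one q (Nat.dvd_factorial (by omega) (by omega)))

theorem exists_eq_nat_div_of_mul_eq_nat {x : ℝ} {M N m : ℕ} (hMN : M ∣ N) (hN : 0 < N)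
    (h : (M : ℝ) * x = m) : ∃ k : ℕ, x = k / N := by
  obtain ⟨d, rfl⟩ := hMN
  refine ⟨d * m, ?_⟩
  rw [eq_div_iff (by positivity)]
  push_cast
  rw [← h]
  ring

theorem exists_eq_nat_div_of_pow_mul_sub_eq {q N i j c c' : ℕ} {x : ℝ} (hx : 0 ≤ x)
    (hpow : q ^ i ≤ q ^ j) (hdvd : q ^ j - q ^ i ∣ N) (hN : 0 < N)
    (h : (q : ℝ) ^ i * x - c = (q : ℝ) ^ j * x - c') : ∃ k : ℕ, x = k / N := by
  have hdiff : ((q ^ j - q ^ i : ℕ) : ℝ) * x = (c' : ℝ) - c := by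
    push_cast [Nat.cast_sub hpow]
    linarith
  have hcc' : c ≤ c' := by
    have : (0 : ℝ) ≤ c' - c := hdiff ▸ by positivity
    exact_mod_cast sub_nonneg.mp this
  exact exists_eq_nat_div_of_mul_eq_nat hdvd hN (by rw [hdiff, Nat.cast_sub hcc'])

section Descent

variable {B : Set ℝ} {l : ℝ}

theorem exists_sub_nat_mem_le (h0 : ∀ b ∈ B, 0 ≤ b) (hsub : ∀ b ∈ B, l < b → b - 1 ∈ B)
    {b : ℝ} (hb : b ∈ B) : ∃ m : ℕ, b - m ∈ B ∧ b - m ≤ l := by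
  obtain ⟨K, hK⟩ := exists_nat_gt b
  induction K generalizing b with
  | zero => exact absurd (h0 b hb) (by simpa using hK)
  | succ K ih =>
    by_cases hbl : b ≤ l
    · exact ⟨0, by simpa using hb, by simpa using hbl⟩
    obtain ⟨m, hm⟩ := ih (hsub b hb (not_le.mp hbl)) (by push_cast at hK; linarith)
    refine ⟨m + 1, ?_⟩
    rwa [Nat.cast_succ, ← sub_sub, sub_right_comm]

theorem exists_pow_mul_sub_nat_mem_le (h0 : ∀ b ∈ B, 0 ≤ b)
    (hsub : ∀ b ∈ B, l < b → b - 1 ∈ B) {q : ℕ} (hmul : ∀ b ∈ B, (q : ℝ) * b ∈ B)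
    {x : ℝ} (hx : x ∈ B) (i : ℕ) : ∃ c : ℕ, (q : ℝ) ^ i * x - c ∈ B ∧ (q : ℝ) ^ i * x - c ≤ l := by
  induction i with
  | zero => simpa using exists_sub_nat_mem_le h0 hsub hx
  | succ i ih =>
    obtain ⟨c, hcB, -⟩ := ih
    obtain ⟨m, hm⟩ := exists_sub_nat_mem_le h0 hsub (hmul _ hcB)
    refine ⟨q * c + m, ?_⟩
    rwa [show (q : ℝ) ^ (i + 1) * x - ((q * c + m : ℕ) : ℝ) = q * (q ^ i * x - c) - m by
      push_cast; ring]

end Descent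

theorem exists_lt_le_eq_of_ncard_le {β : Type*} {t : Set β} (ht : t.Finite) {n : ℕ}
    (hcard : t.ncard ≤ n) {f : ℕ → β} (hf : ∀ i ≤ n, f i ∈ t) :
    ∃ i j, i < j ∧ j ≤ n ∧ f i = f j := by
  have hlt : t.ncard < (Set.Iic n).ncard := by
    rw [← Finset.coe_Iic, Set.ncard_coe_finset, Nat.card_Iic]
    omega
  obtain ⟨i, hi, j, hj, hne, hfij⟩ := Set.exists_ne_map_eq_of_ncard_lt_of_maps_to hlt hf ht
  rcases hne.lt_or_gt with h | h
  · exact ⟨i, j, h, hj, hfij⟩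
  · exact ⟨j, i, h, hi, hfij.symm⟩

end AccDenominator

open AccDenominator in
theorem acc_denominator_bound_general (l n q : ℕ) (hq : 2 ≤ q) :
    ∃ N : ℕ, 0 < N ∧ ∀ B : Set ℝ,
      (∀ b ∈ B, (0 : ℝ) ≤ b) →
      (∀ b ∈ B, (l : ℝ) < b → b - 1 ∈ B) →
      (∀ b ∈ B, (q : ℝ) * b ∈ B) →
      (B ∩ Set.Icc (0 : ℝ) (l : ℝ)).Finite →
      (B ∩ Set.Icc (0 : ℝ) (l : ℝ)).ncard ≤ n →
      ∀ b ∈ B, ∃ k : ℕ, b = (k : ℝ) / (N : ℝ) := by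
  have hN : 0 < q ^ n * (q ^ n.factorial - 1) := by
    have : q ≤ q ^ n.factorial := Nat.le_self_pow n.factorial_ne_zero q
    exact Nat.mul_pos (by positivity) (by omega)
  refine ⟨_, hN, fun B h0 hsub hmul hfin hcard b hb => ?_⟩
  choose c hc using exists_pow_mul_sub_nat_mem_le h0 hsub hmul hb
  obtain ⟨i, j, hij, hjn, heq⟩ := exists_lt_le_eq_of_ncard_le hfin hcard
    (f := fun i => (q : ℝ) ^ i * b - c i) fun i _ => ⟨(hc i).1, h0 _ (hc i).1, (hc i).2⟩
  exact exists_eq_nat_div_of_pow_mul_sub_eq (h0 b hb) (Nat.pow_le_pow_right (by omega) hij.le)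
    (pow_sub_pow_dvd_pow_mul_pow_factorial_sub_one q hij hjn) hN heq

/-- If `B ⊆ ℝ_{≥0}` is closed under subtracting 1 (above `l`) and under multiplication
by `q`, and `B ∩ [0, l]` has at most `n` elements, then every element of `B` has the
form `k/N` with `N = q^n(q^{n!} − 1)`. -/
theorem acc_denominator_bound (l n q : ℕ) (hl : 0 < l) (hn : 0 < n) (hq : 2 ≤ q) :
    ∃ N : ℕ, 0 < N ∧ ∀ B : Set ℝ,
      (∀ b ∈ B, (0 : ℝ) ≤ b) →
      (∀ b ∈ B, (l : ℝ) < b → b - 1 ∈ B) →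
      (∀ b ∈ B, (q : ℝ) * b ∈ B) →
      (B ∩ Set.Icc (0 : ℝ) (l : ℝ)).Finite →
      (B ∩ Set.Icc (0 : ℝ) (l : ℝ)).ncard ≤ n →
      ∀ b ∈ B, ∃ k : ℕ, b = (k : ℝ) / (N : ℝ) :=
  acc_denominator_bound_general l n q hq
end

section
/- Let l, n > 0, q ≥ 2 be integers, let N = q^n(q^{n!} − 1), and let b ≥ 0 be a real number with b ∉ (1/N)·ℤ. For each integer m ≥ 0 define b_m := (q^m b − ⌊q^m b⌋) + min{ l − 1, ⌊q^m b⌋ }. Then b_0, b_1, …, b_n are n + 1 pairwise distinct real numbers, each lying in the interval [0, l]. -/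
/-!
If `b_i = b_j` with `i < j ≤ n`, then `q^i b` and `q^j b` have the same fractional part (the
truncated floors added to them are integers), so `(q^j - q^i) b` is an integer. But
`q^j - q^i = q^i (q^(j-i) - 1)` divides `N = q^n (q^(n!) - 1)` because `j - i ∣ n!`, which
would put `b` in `(1/N)·ℤ`.
-/

lemma pow_sub_pow_dvd_pow_mul_pow_factorial_sub_one {R : Type*} [CommRing R] (x : R)
    {i j n : ℕ} (hij : i < j) (hjn : j ≤ n) :
    x ^ j - x ^ i ∣ x ^ n * (x ^ n.factorial - 1) := by
  have hsplit : x ^ j - x ^ i = x ^ i * (x ^ (j - i) - 1) := by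
    rw [mul_sub, mul_one, ← pow_add, Nat.add_sub_cancel' hij.le]
  rw [hsplit]
  have hdiff_dvd : j - i ∣ n.factorial :=
    Nat.dvd_factorial (Nat.sub_pos_of_lt hij) ((Nat.sub_le j i).trans hjn)
  exact mul_dvd_mul (pow_dvd_pow x (hij.le.trans hjn)) (dvd_pow_sub_one_of_dvd hdiff_dvd)

lemma exists_eq_intCast_div_of_mul_eq_intCast {K : Type*} [Field K] {b : K} {D M z : ℤ}
    (hb : b * D = z) (hDM : D ∣ M) (hM : (M : K) ≠ 0) : ∃ k : ℤ, b = k / M := by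
  obtain ⟨c, rfl⟩ := hDM
  refine ⟨z * c, ?_⟩
  rw [eq_div_iff hM]
  push_cast
  rw [← hb]
  ring

lemma exists_eq_intCast_div_of_fract_pow_mul_eq (q : ℤ) {i j n : ℕ} (hij : i < j)
    (hjn : j ≤ n) {b : ℝ} (hN : ((q ^ n * (q ^ n.factorial - 1) : ℤ) : ℝ) ≠ 0)
    (hfract : Int.fract ((q : ℝ) ^ i * b) = Int.fract ((q : ℝ) ^ j * b)) :
    ∃ k : ℤ, b = k / ((q ^ n * (q ^ n.factorial - 1) : ℤ) : ℝ) := by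
  obtain ⟨z, hz⟩ := Int.fract_eq_fract.mp hfract.symm
  have hbD : b * ((q ^ j - q ^ i : ℤ) : ℝ) = z := by
    push_cast
    linear_combination hz
  exact exists_eq_intCast_div_of_mul_eq_intCast hbD
    (pow_sub_pow_dvd_pow_mul_pow_factorial_sub_one q hij hjn) hN

section FloorRing

variable {α : Type*} [Ring α] [LinearOrder α] [IsStrictOrderedRing α] [FloorRing α]

lemma Int.fract_fract_add_min_floor (a : ℤ) (x : α) :
    Int.fract (Int.fract x + min (a : α) ⌊x⌋) = Int.fract x := by
  rw [← Int.cast_min, Int.fract_add_intCast, Int.fract_fract]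

lemma Int.fract_add_min_floor_mem_Ico {l x : α} (hl : 1 ≤ l) (hx : 0 ≤ x) :
    Int.fract x + min (l - 1) ⌊x⌋ ∈ Set.Ico 0 l := by
  have hmin_nonneg : 0 ≤ min (l - 1) (⌊x⌋ : α) :=
    le_min (sub_nonneg.mpr hl) (mod_cast Int.floor_nonneg.mpr hx)
  constructor
  · exact add_nonneg (Int.fract_nonneg x) hmin_nonneg
  · simpa using add_lt_add_of_lt_of_le (Int.fract_lt_one x) (min_le_left (l - 1) (⌊x⌋ : α))

end FloorRing

theorem distinct_fractional_parts_general (l n q : ℕ) (hl : 0 < l) (hq : 2 ≤ q)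
    (N : ℕ) (hN : N = q ^ n * (q ^ n.factorial - 1))
    (b : ℝ) (hb : 0 ≤ b) (hbN : ¬ ∃ k : ℤ, b = (k : ℝ) / (N : ℝ))
    (bseq : ℕ → ℝ)
    (hbseq : ∀ m : ℕ, bseq m =
      ((q : ℝ) ^ m * b - (⌊(q : ℝ) ^ m * b⌋ : ℝ)) +
        min ((l : ℝ) - 1) ((⌊(q : ℝ) ^ m * b⌋ : ℤ) : ℝ)) :
    (∀ i ≤ n, ∀ j ≤ n, bseq i = bseq j → i = j) ∧
      ∀ m ≤ n, bseq m ∈ Set.Icc (0 : ℝ) (l : ℝ) := by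
  simp only [Int.self_sub_floor] at hbseq
  have hNint :
      ((N : ℤ) : ℝ) = (((q : ℤ) ^ n * ((q : ℤ) ^ n.factorial - 1) : ℤ) : ℝ) := by
    rw [hN, Nat.cast_mul, Nat.cast_sub (Nat.one_le_pow _ _ (by omega))]
    push_cast
    rfl
  have hN0 : ((N : ℤ) : ℝ) ≠ 0 := by
    rw [hN]
    exact_mod_cast (Nat.mul_pos (Nat.pow_pos (by omega))
      (Nat.sub_pos_of_lt (Nat.one_lt_pow (Nat.factorial_ne_zero n) hq))).ne'
  have fract_ne : ∀ i j, i < j → j ≤ n →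
      Int.fract ((q : ℝ) ^ i * b) ≠ Int.fract ((q : ℝ) ^ j * b) := fun i j hij hjn hfract =>
    hbN (by simpa [← hNint] using
      exists_eq_intCast_div_of_fract_pow_mul_eq q hij hjn (hNint ▸ hN0) hfract)
  refine ⟨fun i hi j hj hij => ?_, fun m _ => ?_⟩
  · have hfract : Int.fract ((q : ℝ) ^ i * b) = Int.fract ((q : ℝ) ^ j * b) := by
      have := congrArg Int.fract hij
      rwa [hbseq, hbseq, ← Int.cast_natCast l, ← Int.cast_one, ← Int.cast_sub,
        Int.fract_fract_add_min_floor, Int.fract_fract_add_min_floor] at this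
    by_contra hne
    rcases lt_or_gt_of_ne hne with h | h
    · exact fract_ne i j h hj hfract
    · exact fract_ne j i h hi hfract.symm
  · rw [hbseq]
    exact Set.Ico_subset_Icc_self
      (Int.fract_add_min_floor_mem_Ico (by exact_mod_cast hl) (by positivity))

/-- For `N = q^n(q^{n!} − 1)` and `b ≥ 0` with `b ∉ (1/N)·ℤ`, the numbers
`b_m := (q^m b − ⌊q^m b⌋) + min(l − 1, ⌊q^m b⌋)` for `m = 0, …, n` are pairwise
distinct and lie in `[0, l]`. -/
theorem distinct_fractional_parts (l n q : ℕ) (hl : 0 < l) (hn : 0 < n) (hq : 2 ≤ q)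
    (N : ℕ) (hN : N = q ^ n * (q ^ n.factorial - 1))
    (b : ℝ) (hb : 0 ≤ b) (hbN : ¬ ∃ k : ℤ, b = (k : ℝ) / (N : ℝ))
    (bseq : ℕ → ℝ)
    (hbseq : ∀ m : ℕ, bseq m =
      ((q : ℝ) ^ m * b - (⌊(q : ℝ) ^ m * b⌋ : ℝ)) +
        min ((l : ℝ) - 1) ((⌊(q : ℝ) ^ m * b⌋ : ℤ) : ℝ)) :
    (∀ i ≤ n, ∀ j ≤ n, bseq i = bseq j → i = j) ∧
      ∀ m ≤ n, bseq m ∈ Set.Icc (0 : ℝ) (l : ℝ) :=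
  distinct_fractional_parts_general l n q hl hq N hN b hb hbN bseq hbseq
end

section
/- Let 𝒰 be a non-principal ultrafilter on ℕ, let R be a commutative ring, and for each m ∈ ℕ let 𝔞_m, 𝔟_m ⊆ R be ideals. Suppose there is an integer l > 0 such that each 𝔞_m is generated by at most l elements. Then in the ultrapower ring R* := (∏_m R)/∼_𝒰, the product of the ideals ulim_m 𝔞_m and ulim_m 𝔟_m equals ulim_m (𝔞_m · 𝔟_m). -/
open Filter

/-- The ultraproduct `ulim_m 𝔞_m` of a family of ideals `𝔞_m ⊆ R`, as an ideal of the
ultrapower `R* = (∏_m R)/∼_𝒰`, realized as the germ ring at the ultrafilter `𝒰`. -/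
def ulimIdeal {R : Type*} [CommRing R] (𝒰 : Ultrafilter ℕ) (a : ℕ → Ideal R) :
    Ideal ((𝒰 : Filter ℕ).Germ R) where
  carrier := {x | ∃ f : ℕ → R, (∀ᶠ m in (𝒰 : Filter ℕ), f m ∈ a m) ∧ x = Filter.Germ.ofFun f}
  zero_mem' := ⟨0, Filter.Eventually.of_forall fun m => (a m).zero_mem, rfl⟩
  add_mem' := by
    rintro x y ⟨f, hf, rfl⟩ ⟨g, hg, rfl⟩
    exact ⟨f + g, (hf.and hg).mono fun m h => (a m).add_mem h.1 h.2, rfl⟩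
  smul_mem' := by
    intro c x hx
    obtain ⟨f, hf, rfl⟩ := hx
    refine Filter.Germ.inductionOn c fun g => ?_
    exact ⟨g * f, hf.mono fun m h => (a m).mul_mem_left _ h, rfl⟩

/-
Write each `𝔞 m` as the span of a family `s m : Fin l → R`, padding with zeros. An element of
`𝔞 m * 𝔟 m` is then `∑ i, s m i * b m i` with all `b m i ∈ 𝔟 m`. Since the number `l` of summands
does not depend on `m`, the germ of such a family is the finite sum over `i` of the products of the
germs of `m ↦ s m i ∈ 𝔞 m` and `m ↦ b m i ∈ 𝔟 m`, hence lies in `ulim 𝔞 * ulim 𝔟`.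
-/

namespace Ideal

variable {R : Type*} [CommRing R]

theorem exists_fin_span_range_eq {S : Finset R} {l : ℕ} (hS : S.card ≤ l) :
    ∃ s : Fin l → R, span (Set.range s) = span (S : Set R) := by
  refine ⟨fun i => S.toList.getD i 0, le_antisymm (span_le.mpr ?_) (span_mono ?_)⟩
  · rintro _ ⟨i, rfl⟩
    dsimp only
    by_cases hi : (i : ℕ) < S.toList.length
    · rw [List.getD_eq_getElem _ _ hi]
      exact subset_span (Finset.mem_toList.mp (List.getElem_mem hi))
    · rw [List.getD_eq_default _ _ (not_lt.mp hi)]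
      exact zero_mem _
  · intro t ht
    obtain ⟨j, hj, rfl⟩ := List.getElem_of_mem (Finset.mem_toList.mpr ht)
    exact ⟨⟨j, hj.trans_le (by simpa using hS)⟩, List.getD_eq_getElem _ _ hj⟩

theorem exists_sum_mul_of_mem_span_range_mul {ι : Type*} [Fintype ι] {s : ι → R} {J : Ideal R}
    {x : R} (hx : x ∈ span (Set.range s) * J) :
    ∃ b : ι → R, (∀ i, b i ∈ J) ∧ x = ∑ i, s i * b i := by
  rw [mul_comm, ← smul_eq_mul, span, Submodule.mem_ideal_smul_span_iff_exists_sum] at hx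
  obtain ⟨b, hb, rfl⟩ := hx
  exact ⟨b, hb, by simp [Finsupp.sum_fintype, mul_comm]⟩

end Ideal

section

variable {R : Type*} [CommRing R] (𝒰 : Ultrafilter ℕ)

theorem ofFun_mem_ulimIdeal {a : ℕ → Ideal R} {f : ℕ → R}
    (hf : ∀ᶠ m in (𝒰 : Filter ℕ), f m ∈ a m) :
    (f : (𝒰 : Filter ℕ).Germ R) ∈ ulimIdeal 𝒰 a :=
  ⟨f, hf, rfl⟩

theorem ulimIdeal_mul_le (𝔞 𝔟 : ℕ → Ideal R) :
    ulimIdeal 𝒰 𝔞 * ulimIdeal 𝒰 𝔟 ≤ ulimIdeal 𝒰 (fun m => 𝔞 m * 𝔟 m) := by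
  rw [Ideal.mul_le]
  rintro _ ⟨f, hf, rfl⟩ _ ⟨g, hg, rfl⟩
  exact ofFun_mem_ulimIdeal 𝒰 ((hf.and hg).mono fun m h => Ideal.mul_mem_mul h.1 h.2)

theorem ofFun_sum_mul_mem_ulimIdeal_mul {ι : Type*} [Fintype ι] {𝔞 𝔟 : ℕ → Ideal R}
    {a b : ℕ → ι → R} (ha : ∀ i, ∀ᶠ m in (𝒰 : Filter ℕ), a m i ∈ 𝔞 m)
    (hb : ∀ i, ∀ᶠ m in (𝒰 : Filter ℕ), b m i ∈ 𝔟 m) :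
    ((fun m => ∑ i, a m i * b m i : ℕ → R) : (𝒰 : Filter ℕ).Germ R) ∈
      ulimIdeal 𝒰 𝔞 * ulimIdeal 𝒰 𝔟 := by
  have hsum : ((fun m => ∑ i, a m i * b m i : ℕ → R) : (𝒰 : Filter ℕ).Germ R) =
      ∑ i, ((fun m => a m i : ℕ → R) : (𝒰 : Filter ℕ).Germ R) * (fun m => b m i : ℕ → R) := by
    simp only [← Germ.coe_coeRingHom, ← map_mul, ← map_sum]
    congr 1
    ext m
    simp only [Finset.sum_apply, Pi.mul_apply]
  rw [hsum]
  exact Ideal.sum_mem _ fun i _ =>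
    Ideal.mul_mem_mul (ofFun_mem_ulimIdeal 𝒰 (ha i)) (ofFun_mem_ulimIdeal 𝒰 (hb i))

end

theorem ulimIdeal_mul_general {R : Type*} [CommRing R] (𝒰 : Ultrafilter ℕ)
    (𝔞 𝔟 : ℕ → Ideal R) (l : ℕ)
    (hgen : ∀ m, ∃ S : Finset R, S.card ≤ l ∧ Ideal.span (S : Set R) = 𝔞 m) :
    ulimIdeal 𝒰 𝔞 * ulimIdeal 𝒰 𝔟 = ulimIdeal 𝒰 (fun m => 𝔞 m * 𝔟 m) := by
  refine le_antisymm (ulimIdeal_mul_le 𝒰 𝔞 𝔟) ?_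
  have hfin : ∀ m, ∃ s : Fin l → R, Ideal.span (Set.range s) = 𝔞 m := fun m => by
    obtain ⟨S, hS, hspan⟩ := hgen m
    simpa [hspan] using Ideal.exists_fin_span_range_eq hS
  choose s hs using hfin
  rintro _ ⟨f, hf, rfl⟩
  obtain ⟨b, hb⟩ := (hf.mono fun m hm =>
    Ideal.exists_sum_mul_of_mem_span_range_mul (by rwa [hs m])).choice
  have hfb : (f : (𝒰 : Filter ℕ).Germ R) = ((fun m => ∑ i, s m i * b m i : ℕ → R) : _) :=
    Germ.coe_eq.mpr (hb.mono fun m h => h.2)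
  rw [hfb]
  exact ofFun_sum_mul_mem_ulimIdeal_mul 𝒰
    (fun i => .of_forall fun m => hs m ▸ Ideal.subset_span ⟨i, rfl⟩)
    (fun i => hb.mono fun m h => h.1 i)

/-- If each `𝔞_m` is generated by at most `l` elements, then
`(ulim_m 𝔞_m) · (ulim_m 𝔟_m) = ulim_m (𝔞_m · 𝔟_m)` in the ultrapower. -/
theorem ulimIdeal_mul {R : Type*} [CommRing R] (𝒰 : Ultrafilter ℕ)
    (h𝒰 : ∀ A : Set ℕ, A.Finite → A ∉ 𝒰)
    (𝔞 𝔟 : ℕ → Ideal R) (l : ℕ) (hl : 0 < l)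
    (hgen : ∀ m, ∃ S : Finset R, S.card ≤ l ∧ Ideal.span (S : Set R) = 𝔞 m) :
    ulimIdeal 𝒰 𝔞 * ulimIdeal 𝒰 𝔟 = ulimIdeal 𝒰 (fun m => 𝔞 m * 𝔟 m) :=
  ulimIdeal_mul_general 𝒰 𝔞 𝔟 l hgen
end

section
/- Let R be a commutative Noetherian ring and M a finitely generated R-module, and let 𝒰 be a non-principal ultrafilter on ℕ. Then the natural map M ⊗_R R* → M* is an isomorphism, where R* and M* denote the ultrapowers of R and M with respect to 𝒰. -/
open Filter TensorProduct

/-- The natural map `M ⊗_R R* → M*` sending `x ⊗ ulim_m r_m` to `ulim_m (r_m • x)`,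
where `R*` and `M*` are the ultrapowers (germs at the ultrafilter `𝒰`). -/
noncomputable def natUltraMap (𝒰 : Ultrafilter ℕ) (R M : Type*) [CommRing R]
    [AddCommGroup M] [Module R M] :
    M ⊗[R] ((𝒰 : Filter ℕ).Germ R) →ₗ[R] (𝒰 : Filter ℕ).Germ M :=
  TensorProduct.lift <| LinearMap.mk₂ R
    (fun x c => c • ((fun _ => x : ℕ → M) : (𝒰 : Filter ℕ).Germ M))
    (fun x y c => by
      show c • ((fun _ => x + y : ℕ → M) : (𝒰 : Filter ℕ).Germ M)
          = c • ((fun _ => x : ℕ → M) : (𝒰 : Filter ℕ).Germ M)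
            + c • ((fun _ => y : ℕ → M) : (𝒰 : Filter ℕ).Germ M)
      have h : ((fun _ => x + y : ℕ → M) : (𝒰 : Filter ℕ).Germ M)
          = ((fun _ => x : ℕ → M) : (𝒰 : Filter ℕ).Germ M)
            + ((fun _ => y : ℕ → M) : (𝒰 : Filter ℕ).Germ M) := rfl
      rw [h, smul_add])
    (fun r x c => by
      refine Filter.Germ.inductionOn c fun g => ?_
      exact congrArg Filter.Germ.ofFun (funext fun m => smul_comm (g m) r x))
    (fun x c c' => add_smul c c' _)
    (fun r x c => by
      refine Filter.Germ.inductionOn c fun g => ?_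
      exact congrArg Filter.Germ.ofFun (funext fun m => (smul_smul r (g m) x).symm))

/-! Taking germs along a filter is an exact functor (preimages can be chosen pointwise) that
commutes with finite products, so the constant embedding `M → M*` is a base change along
`R → R*` for finite free `M`. A Noetherian `R` makes `M` finitely presented, and since
`- ⊗_R R*` is right exact, the five lemma applied to a presentation `Rᵐ → Rⁿ → M → 0`
gives the base change property for `M`; `natUltraMap` is its comparison map up to the
symmetry of `⊗`. -/

namespace Filter.Germ

variable {α : Type*} (l : Filter α) (R : Type*) [CommRing R]
variable {M N : Type*} [AddCommGroup M] [Module R M] [AddCommGroup N] [Module R N]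

instance instIsScalarTower : IsScalarTower R (Germ l R) (Germ l M) where
  smul_assoc r c x := inductionOn₂ c x fun c x =>
    congrArg ofFun (funext fun a => smul_assoc r (c a) (x a))

-- Built from the existing `Module R (Germ l R)`, so that no second scalar action appears.
instance instAlgebra : Algebra R (Germ l R) :=
  Algebra.ofModule (fun r x y => smul_mul_assoc r x y) fun r x y =>
    inductionOn₂ x y fun x y => congrArg ofFun (funext fun a => mul_smul_comm r (x a) (y a))

variable (M) in
def constₗ : M →ₗ[R] Germ l M where
  toFun := const
  map_add' _ _ := rfl
  map_smul' _ _ := rfl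

variable {l R} in
def mapₗ (f : M →ₗ[R] N) : Germ l M →ₗ[Germ l R] Germ l N where
  toFun := map f
  map_add' x y := inductionOn₂ x y fun x y =>
    congrArg ofFun (funext fun a => f.map_add (x a) (y a))
  map_smul' c x := inductionOn₂ c x fun c x =>
    congrArg ofFun (funext fun a => f.map_smul (c a) (x a))

lemma mapₗ_comp_constₗ (f : M →ₗ[R] N) :
    (mapₗ f).restrictScalars R ∘ₗ constₗ l R M = constₗ l R N ∘ₗ f :=
  rfl

lemma _root_.Function.Surjective.germ_map {β γ : Type*} {f : β → γ} (hf : f.Surjective) :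
    (map f : Germ l β → Germ l γ).Surjective := fun y =>
  inductionOn y fun y => ⟨ofFun (Function.surjInv hf ∘ y),
    congrArg ofFun (funext fun a => Function.surjInv_eq hf (y a))⟩

open Classical in
lemma _root_.Function.Exact.germ_map {β γ δ : Type*} [Nonempty β] [Zero δ] {f : β → γ}
    {g : γ → δ} (hfg : Function.Exact f g) :
    Function.Exact (map f : Germ l β → Germ l γ) (map g) := fun y => by
  induction y using inductionOn with | h y => ?_
  refine ⟨fun hy => ?_, ?_⟩
  · have hy : ∀ᶠ a in l, y a ∈ Set.range f := (coe_eq.mp hy).mono fun a ha => (hfg _).mp ha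
    refine ⟨ofFun fun a => if h : y a ∈ Set.range f then h.choose else Classical.arbitrary β,
      coe_eq.mpr (hy.mono fun a ha => ?_)⟩
    simp only [Function.comp_apply, dif_pos ha, ha.choose_spec]
  · rintro ⟨x, hx⟩
    induction x using inductionOn with | h x => ?_
    rw [← hx]
    exact congrArg ofFun (funext fun a => (hfg _).mpr ⟨x a, rfl⟩)

variable {l R} in
def toPiₗ (ι : Type*) : Germ l (ι → M) →ₗ[Germ l R] ι → Germ l M :=
  LinearMap.pi fun i => mapₗ (LinearMap.proj i)

lemma toPiₗ_bijective (ι : Type*) [Finite ι] :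
    Function.Bijective (toPiₗ (l := l) (R := R) (M := M) ι) := by
  refine ⟨fun x y hxy => ?_, fun c => ?_⟩
  · induction x, y using inductionOn₂ with | h x y => ?_
    exact coe_eq.mpr ((eventually_all.mpr fun i => coe_eq.mp (congrFun hxy i)).mono
      fun a ha => funext ha)
  · choose f hf using fun i => inductionOn (c i) (p := fun c => ∃ g : α → M, ↑g = c)
      fun g => ⟨g, rfl⟩
    exact ⟨ofFun fun a i => f i a, funext hf⟩

lemma isBaseChange_constₗ_pi (ι : Type*) [Finite ι] :
    IsBaseChange (Germ l R) (constₗ l R (ι → R)) := by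
  refine (IsBaseChange.iff_of_equiv_comm (LinearEquiv.refl R (ι → R))
    (LinearEquiv.ofBijective (toPiₗ ι) (toPiₗ_bijective l R ι)) ?_).mpr
    (IsBaseChange.finitePow ι (IsBaseChange.linearMap R (Germ l R)))
  refine LinearMap.ext fun v => funext fun i => ?_
  change algebraMap R (Germ l R) (v i) = const (v i)
  exact congrArg ofFun (funext fun _ => mul_one (v i))

variable (M) in
theorem isBaseChange_constₗ [Module.FinitePresentation R M] :
    IsBaseChange (Germ l R) (constₗ l R M) := by
  obtain ⟨n, m, g, f, hg, hfg⟩ := Module.FinitePresentation.exists_fin' R M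
  have hexact : Function.Exact (mapₗ (l := l) f) (mapₗ g) := hfg.germ_map l
  have hsurj : Function.Surjective (mapₗ (l := l) g) := hg.germ_map l
  exact IsBaseChange.of_right_exact _ _ _ _ (mapₗ_comp_constₗ l R f).symm
    (mapₗ_comp_constₗ l R g).symm (isBaseChange_constₗ_pi l R _)
    (isBaseChange_constₗ_pi l R _) hfg hg hexact hsurj

end Filter.Germ

lemma natUltraMap_bijective_of_isBaseChange (𝒰 : Ultrafilter ℕ) (R M : Type*) [CommRing R]
    [AddCommGroup M] [Module R M]
    (h : IsBaseChange ((𝒰 : Filter ℕ).Germ R) (Germ.constₗ (𝒰 : Filter ℕ) R M)) :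
    Function.Bijective (natUltraMap 𝒰 R M) := by
  have : natUltraMap 𝒰 R M =
      (h.equiv.restrictScalars R).toLinearMap ∘ₗ (TensorProduct.comm R M _).toLinearMap :=
    TensorProduct.ext' fun x c => (h.equiv_tmul c x).symm
  rw [this]
  exact (h.equiv.restrictScalars R).bijective.comp (TensorProduct.comm R M _).bijective

theorem natUltraMap_bijective_general (𝒰 : Ultrafilter ℕ)
    (R M : Type*) [CommRing R] [IsNoetherianRing R] [AddCommGroup M] [Module R M]
    [Module.Finite R M] :
    Function.Bijective (natUltraMap 𝒰 R M) := by
  have := Module.finitePresentation_of_finite R M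
  exact natUltraMap_bijective_of_isBaseChange 𝒰 R M (Germ.isBaseChange_constₗ _ R M)

/-- For a Noetherian ring `R` and a finitely generated `R`-module `M`, the natural
map `M ⊗_R R* → M*` is an isomorphism. -/
theorem natUltraMap_bijective (𝒰 : Ultrafilter ℕ) (h𝒰 : ∀ A : Set ℕ, A.Finite → A ∉ 𝒰)
    (R M : Type*) [CommRing R] [IsNoetherianRing R] [AddCommGroup M] [Module R M]
    [Module.Finite R M] :
    Function.Bijective (natUltraMap 𝒰 R M) :=
  natUltraMap_bijective_general 𝒰 R M
end

section
/- Let k be a field of characteristic p > 0 that is F-finite (the Frobenius map makes k a finite module over itself), let 𝒰 be a non-principal ultrafilter on ℕ, and let k* be the ultrapower of k. Then for every e ≥ 0 the relative Frobenius map F^e_* k ⊗_k k* → F^e_*(k*) is an isomorphism; in particular, k* is an F-finite field. -/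
open Filter

/-- `FrobTwist p e A` is `A` regarded as an algebra over its base via the `e`-th power of
the Frobenius; this is the pushforward `F^e_* A`. -/
def FrobTwist (p e : ℕ) (A : Type*) : Type _ := A

/-- The identity map `A → FrobTwist p e A`. -/
def FrobTwist.of {A : Type*} (p e : ℕ) : A → FrobTwist p e A := id

/-- The identity map `FrobTwist p e A → A`. -/
def FrobTwist.down {A : Type*} (p e : ℕ) : FrobTwist p e A → A := id

instance {A : Type*} [CommRing A] (p e : ℕ) : CommRing (FrobTwist p e A) :=
  inferInstanceAs (CommRing A)

/-- The twisted algebra structure of `F^e_* A` over `k`: a scalar `a ∈ k` acts through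
`a ↦ a^{p^e}`. -/
noncomputable instance FrobTwist.algebra (k A : Type*) [CommRing k] [CommRing A]
    [Algebra k A] (p e : ℕ) [ExpChar k p] : Algebra k (FrobTwist p e A) :=
  ((algebraMap k A).comp (iterateFrobenius k p e)).toAlgebra

/-- The ultrapower `k*` is an algebra over `k` via constant sequences. -/
noncomputable instance germAlgebra (k : Type*) [CommRing k] (l : Filter ℕ) :
    Algebra k (l.Germ k) :=
  ((Filter.Germ.coeRingHom l).comp (Pi.constRingHom ℕ k)).toAlgebra

instance germCharP (k : Type*) [CommRing k] (l : Filter ℕ) [l.NeBot] (p : ℕ) [CharP k p] :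
    CharP (l.Germ k) p :=
  charP_of_injective_ringHom
    (f := (Filter.Germ.coeRingHom l).comp (Pi.constRingHom ℕ k))
    (fun a b h => Filter.Germ.const_inj.mp h) p

instance germExpChar (k : Type*) [CommRing k] (l : Filter ℕ) [l.NeBot] (p : ℕ) [CharP k p]
    [Fact p.Prime] : ExpChar (l.Germ k) p := .prime Fact.out

open TensorProduct in
/-- The relative Frobenius `F^e_* k ⊗_k k* → F^e_*(k*)`,
sending `x ⊗ α` to `x·α^{p^e}` (computed in `k*`). -/
noncomputable def relativeFrobenius (𝒰 : Ultrafilter ℕ) (k : Type*) [Field k] (p : ℕ)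
    [Fact p.Prime] [CharP k p] (e : ℕ) :
    (FrobTwist p e k) ⊗[k] ((𝒰 : Filter ℕ).Germ k) →ₗ[k]
      FrobTwist p e ((𝒰 : Filter ℕ).Germ k) :=
  TensorProduct.lift <| LinearMap.mk₂ k
    (fun x α => FrobTwist.of p e ((algebraMap k ((𝒰 : Filter ℕ).Germ k) x) * α ^ p ^ e))
    (fun x y α => by
      show (algebraMap k ((𝒰 : Filter ℕ).Germ k) (FrobTwist.down p e x + FrobTwist.down p e y)) *
          α ^ p ^ e = _ + _
      rw [map_add, add_mul]; rfl)
    (fun a x α => by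
      show (algebraMap k ((𝒰 : Filter ℕ).Germ k))
          ((iterateFrobenius k p e a) * FrobTwist.down p e x) * α ^ p ^ e
        = (algebraMap k ((𝒰 : Filter ℕ).Germ k)) (iterateFrobenius k p e a) *
          ((algebraMap k ((𝒰 : Filter ℕ).Germ k)) x * α ^ p ^ e)
      rw [map_mul, mul_assoc]; rfl)
    (fun x α β => by
      show (algebraMap k ((𝒰 : Filter ℕ).Germ k) x) * (α + β) ^ p ^ e = _ + _
      rw [add_pow_char_pow, mul_add]; rfl)
    (fun a x α => by
      show (algebraMap k ((𝒰 : Filter ℕ).Germ k) x) * (a • α) ^ p ^ e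
        = (a • FrobTwist.of p e ((algebraMap k ((𝒰 : Filter ℕ).Germ k) x) * α ^ p ^ e) :
            FrobTwist p e ((𝒰 : Filter ℕ).Germ k))
      show (algebraMap k ((𝒰 : Filter ℕ).Germ k) x) *
          ((algebraMap k ((𝒰 : Filter ℕ).Germ k) a) * α) ^ p ^ e =
        (algebraMap k ((𝒰 : Filter ℕ).Germ k)) (iterateFrobenius k p e a) *
          ((algebraMap k ((𝒰 : Filter ℕ).Germ k) x) * α ^ p ^ e)
      rw [mul_pow, iterateFrobenius_def, map_pow]
      ring)

/-! F-finiteness gives, for every `e`, a finite family `b` in `k` such that every element of `k`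
is uniquely of the form `∑ i, c i ^ p ^ e * b i`: a `k`-basis of `F_* k` for `e = 1`, and the
products `b' j ^ p ^ e * b i` of two such families for `e + 1`. Since the family is finite, the
same unique representation holds in the ultrapower, coordinatewise along `𝒰`. Every element of
`F^e_* k ⊗_k k*` is uniquely `∑ i, b i ⊗ α i`, and the relative Frobenius sends it to
`∑ i, α i ^ p ^ e * b i`; so it is bijective. -/

open TensorProduct Module

section PowCombination

variable {A : Type*} [CommRing A] {ι κ : Type*} [Fintype ι] [Fintype κ]

/-- `b` is a basis of `F^e_* A` over `A` exactly when `powCombination (p ^ e) b` is bijective. -/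
def powCombination (q : ℕ) (b : ι → A) (c : ι → A) : A :=
  ∑ i, c i ^ q * b i

lemma powCombination_pi_single [DecidableEq ι] {q : ℕ} (hq : q ≠ 0) (b : ι → A) (i : ι) :
    powCombination q b (Pi.single i 1) = b i := by
  simp [powCombination, Pi.single_apply, zero_pow hq]

lemma powCombination_pow_succ (p : ℕ) [ExpChar A p] (e : ℕ) (b : ι → A) (b' : κ → A)
    (c : ι × κ → A) :
    powCombination (p ^ (e + 1)) (fun ij => b' ij.2 ^ p ^ e * b ij.1) c =
      powCombination (p ^ e) b (fun i => powCombination p b' fun j => c (i, j)) := by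
  simp only [powCombination, Fintype.sum_prod_type, sum_pow_char_pow, Finset.sum_mul]
  refine Finset.sum_congr rfl fun i _ => Finset.sum_congr rfl fun j _ => ?_
  rw [mul_pow, ← pow_mul, pow_succ', mul_assoc]

lemma bijective_powCombination_pow_succ (p : ℕ) [ExpChar A p] {e : ℕ} {b : ι → A}
    {b' : κ → A} (hb : (powCombination (p ^ e) b).Bijective)
    (hb' : (powCombination p b').Bijective) :
    (powCombination (p ^ (e + 1)) fun ij : ι × κ => b' ij.2 ^ p ^ e * b ij.1).Bijective := by
  have h : powCombination (p ^ (e + 1)) (fun ij : ι × κ => b' ij.2 ^ p ^ e * b ij.1) =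
      powCombination (p ^ e) b ∘ Pi.map (fun _ => powCombination p b') ∘ Equiv.curry ι κ A :=
    funext (powCombination_pow_succ p e b b')
  rw [h]
  exact hb.comp ((Function.Bijective.piMap fun _ => hb').comp (Equiv.curry ι κ A).bijective)

end PowCombination

lemma FrobTwist.smul_of {R A : Type*} [CommRing R] [CommRing A] [Algebra R A] (p e : ℕ)
    [ExpChar R p] (a : R) (x : A) :
    a • FrobTwist.of p e x = FrobTwist.of p e (algebraMap R A a ^ p ^ e * x) := by
  show algebraMap R A (iterateFrobenius R p e a) * x = _
  rw [iterateFrobenius_def, map_pow]; rfl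

noncomputable def powCombinationLinearMap {A ι : Type*} [CommRing A] [Fintype ι] (p e : ℕ)
    [ExpChar A p] (b : ι → A) : (ι → A) →ₗ[A] FrobTwist p e A where
  toFun c := FrobTwist.of p e (powCombination (p ^ e) b c)
  map_add' c d := by
    change (∑ i, (c i + d i) ^ p ^ e * b i : A) = ∑ i, c i ^ p ^ e * b i + ∑ i, d i ^ p ^ e * b i
    simp only [add_pow_expChar_pow, add_mul, Finset.sum_add_distrib]
  map_smul' a c := by
    rw [RingHom.id_apply, FrobTwist.smul_of, Algebra.algebraMap_self_apply]
    simp only [powCombination, Pi.smul_apply, smul_eq_mul, mul_pow, Finset.mul_sum, mul_assoc]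

lemma bijective_powCombination_basis {A ι : Type*} [CommRing A] [Fintype ι] (p e : ℕ)
    [ExpChar A p] (B : Basis ι A (FrobTwist p e A)) :
    (powCombination (p ^ e) (FrobTwist.down p e ∘ B)).Bijective := by
  have h : powCombination (p ^ e) (FrobTwist.down p e ∘ B) =
      FrobTwist.down p e ∘ B.equivFun.symm := by
    ext c
    simp only [Function.comp_apply, Basis.equivFun_symm_apply]
    rfl
  rw [h]
  exact Function.bijective_id.comp B.equivFun.symm.bijective

noncomputable def frobTwistBasis {A ι : Type*} [CommRing A] [Fintype ι] (p e : ℕ)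
    [ExpChar A p] (b : ι → A) (hb : (powCombination (p ^ e) b).Bijective) :
    Basis ι A (FrobTwist p e A) :=
  Basis.ofEquivFun (LinearEquiv.ofBijective (powCombinationLinearMap p e b) hb).symm

lemma frobTwistBasis_apply {A ι : Type*} [CommRing A] [Fintype ι] (p e : ℕ) [ExpChar A p]
    (b : ι → A) (hb : (powCombination (p ^ e) b).Bijective) (i : ι) :
    frobTwistBasis p e b hb i = FrobTwist.of p e (b i) := by
  classical
  simp [frobTwistBasis, Basis.coe_ofEquivFun, powCombinationLinearMap,
    powCombination_pi_single (pow_ne_zero e (expChar_ne_zero A p))]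

lemma exists_bijective_powCombination {k : Type*} [Field k] (p : ℕ) [ExpChar k p]
    (hF : Module.Finite k (FrobTwist p 1 k)) (e : ℕ) :
    ∃ (ι : Type) (_ : Fintype ι) (b : ι → k), (powCombination (p ^ e) b).Bijective := by
  induction e with
  | zero =>
    refine ⟨Unit, inferInstance, fun _ => 1, ?_⟩
    have h : powCombination (p ^ 0) (fun _ : Unit => (1 : k)) = Equiv.funUnique Unit k := by
      ext c; simp [powCombination]
    exact h ▸ (Equiv.funUnique Unit k).bijective
  | succ e ih =>
    obtain ⟨ι, _, b, hb⟩ := ih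
    have hb' := bijective_powCombination_basis p 1 (Module.finBasis k (FrobTwist p 1 k))
    rw [pow_one] at hb'
    exact ⟨_, inferInstance, _, bijective_powCombination_pow_succ p hb hb'⟩

section Germ

variable {R : Type*} [CommRing R] {ι : Type*} [Fintype ι] (l : Filter ℕ)

lemma powCombination_germ (q : ℕ) (b : ι → R) (g : ι → ℕ → R) :
    powCombination q (fun i => algebraMap R (l.Germ R) (b i)) (fun i => (g i : l.Germ R)) =
      ↑(fun n => powCombination q b fun i => g i n) := by
  have h : (fun n => powCombination q b fun i => g i n) = ∑ i, g i ^ q * fun _ => b i := by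
    ext n
    simp [powCombination]
  rw [h, ← Filter.Germ.coe_coeRingHom, map_sum]
  simp only [map_mul, map_pow]
  rfl

lemma bijective_powCombination_germ {q : ℕ} {b : ι → R} (hb : (powCombination q b).Bijective) :
    (powCombination q fun i => algebraMap R (l.Germ R) (b i)).Bijective := by
  have exists_coe (α : ι → l.Germ R) : ∃ g : ι → ℕ → R, (fun i => (g i : l.Germ R)) = α := by
    choose g hg using fun i => (α i).inductionOn (p := fun γ => ∃ f : ℕ → R, ↑f = γ)
      fun f => ⟨f, rfl⟩
    exact ⟨g, funext hg⟩
  refine ⟨fun α β hαβ => ?_, fun γ => ?_⟩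
  · obtain ⟨g, rfl⟩ := exists_coe α
    obtain ⟨h, rfl⟩ := exists_coe β
    rw [powCombination_germ, powCombination_germ, Filter.Germ.coe_eq] at hαβ
    funext i
    exact Filter.Germ.coe_eq.2 (hαβ.mono fun n hn => congrFun (hb.1 hn) i)
  · induction γ using Filter.Germ.inductionOn with | _ f => ?_
    choose c hc using fun n => hb.2 (f n)
    exact ⟨fun i => ↑fun n => c n i, by rw [powCombination_germ]; exact congrArg _ (funext hc)⟩

end Germ

lemma Module.Basis.bijective_sum_tmul {R M N ι : Type*} [CommRing R] [AddCommGroup M] [Module R M]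
    [AddCommGroup N] [Module R N] [Fintype ι] (B : Basis ι R M) :
    (fun α : ι → N => ∑ i, B i ⊗ₜ[R] α i).Bijective := by
  classical
  have h : (fun α : ι → N => ∑ i, B i ⊗ₜ[R] α i) =
      (equivFinsuppOfBasisLeft B).symm ∘ Finsupp.equivFunOnFinite.symm := by
    ext α
    have := LinearMap.congr_fun (equivFinsuppOfBasisLeft_symm (N := N) B)
      (Finsupp.equivFunOnFinite.symm α)
    simp only [LinearEquiv.coe_coe, Finsupp.lsum_apply] at this
    rw [Function.comp_apply, this, Finsupp.sum_fintype _ _ fun i => map_zero _]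
    rfl
  rw [h]
  exact (equivFinsuppOfBasisLeft B).symm.bijective.comp Finsupp.equivFunOnFinite.symm.bijective

lemma relativeFrobenius_sum_tmul (𝒰 : Ultrafilter ℕ) {k : Type*} [Field k] (p : ℕ)
    [Fact p.Prime] [CharP k p] (e : ℕ) {ι : Type*} [Fintype ι] (b : ι → k)
    (α : ι → (𝒰 : Filter ℕ).Germ k) :
    relativeFrobenius 𝒰 k p e (∑ i, FrobTwist.of p e (b i) ⊗ₜ[k] α i) =
      FrobTwist.of p e (powCombination (p ^ e) (fun i => algebraMap k _ (b i)) α) := by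
  simp only [map_sum, powCombination, mul_comm (α _ ^ _)]
  rfl

theorem relativeFrobenius_bijective_general (𝒰 : Ultrafilter ℕ)
    (k : Type*) [Field k] (p : ℕ)
    [Fact p.Prime] [CharP k p] (hFfin : Module.Finite k (FrobTwist p 1 k)) :
    (∀ e : ℕ, Function.Bijective (relativeFrobenius 𝒰 k p e)) ∧
      Module.Finite ((𝒰 : Filter ℕ).Germ k)
        (FrobTwist p 1 ((𝒰 : Filter ℕ).Germ k)) := by
  refine ⟨fun e => ?_, ?_⟩
  · obtain ⟨ι, _, b, hb⟩ := exists_bijective_powCombination p hFfin e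
    let B := frobTwistBasis p e b hb
    rw [← Function.Bijective.of_comp_iff _ (B.bijective_sum_tmul (N := (𝒰 : Filter ℕ).Germ k))]
    have h : relativeFrobenius 𝒰 k p e ∘ (fun α => ∑ i, B i ⊗ₜ[k] α i) =
        FrobTwist.of p e ∘ powCombination (p ^ e) fun i => algebraMap k _ (b i) :=
      funext fun α => by
        simp only [Function.comp_apply, B, frobTwistBasis_apply, relativeFrobenius_sum_tmul]
    rw [h]
    exact Function.bijective_id.comp (bijective_powCombination_germ _ hb)
  · obtain ⟨ι, _, b, hb⟩ := exists_bijective_powCombination p hFfin 1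
    exact Module.Finite.of_surjective (powCombinationLinearMap p 1 _)
      (bijective_powCombination_germ _ hb).2

open TensorProduct in
/-- If `k` is an `F`-finite field of characteristic `p > 0` and `𝒰` is a non-principal
ultrafilter on `ℕ`, then for every `e ≥ 0` the relative Frobenius
`F^e_* k ⊗_k k* → F^e_*(k*)` is an isomorphism; in particular the ultrapower `k*` is
again `F`-finite. -/
theorem relativeFrobenius_bijective (𝒰 : Ultrafilter ℕ)
    (h𝒰 : ∀ A : Set ℕ, A.Finite → A ∉ 𝒰) (k : Type*) [Field k] (p : ℕ)
    [Fact p.Prime] [CharP k p] (hFfin : Module.Finite k (FrobTwist p 1 k)) :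
    (∀ e : ℕ, Function.Bijective (relativeFrobenius 𝒰 k p e)) ∧
      Module.Finite ((𝒰 : Filter ℕ).Germ k)
        (FrobTwist p 1 ((𝒰 : Filter ℕ).Germ k)) :=
  relativeFrobenius_bijective_general 𝒰 k p hFfin
end
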